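/- In a basic lattice B, if U ⊆ B is ⪯-directed then U^≺ := {y : ∃x ∈ U, x ≺ y} is a ≺-filter (i.e. upward closed under ≻ and ≺-directed downward). Moreover, U is a ≺-filter if and only if U is a ⪯-filter that is ≺-coinitial (U ⊆ U^≺). -/

import Mathlib

/-- A basic lattice: a transitive relation `prec` (≺) with minimum `zero`,
whose reflexivization `ple` (⪯) is a lattice order with meet `inf` and join `sup`,
satisfying coinitiality, cofinality, interpolation, multiplicativity, additivity,
decomposition and complementation. -/
structure BasicLattice (B : Type) where
  prec : B → B → Prop
  zero : B
  inf : B → B → B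
  sup : B → B → B
  trans : ∀ {x y z : B}, prec x y → prec y z → prec x z
  min : ∀ x, prec zero x
  antisymm : ∀ x y, (∀ z, prec z x → prec z y) → (∀ z, prec z y → prec z x) → x = y
  inf_le_left : ∀ x y z, prec z (inf x y) → prec z x
  inf_le_right : ∀ x y z, prec z (inf x y) → prec z y
  le_inf : ∀ x y w, (∀ z, prec z w → prec z x) → (∀ z, prec z w → prec z y) →
    ∀ z, prec z w → prec z (inf x y)
  le_sup_left : ∀ x y z, prec z x → prec z (sup x y)
  le_sup_right : ∀ x y z, prec z y → prec z (sup x y)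
  sup_le : ∀ x y w, (∀ z, prec z x → prec z w) → (∀ z, prec z y → prec z w) →
    ∀ z, prec z (sup x y) → prec z w
  coinit : ∀ x, x ≠ zero → ∃ z, z ≠ zero ∧ prec z x
  cofin : ∀ x, ∃ y, prec x y
  interp : ∀ x y, prec x y → ∃ z, prec x z ∧ prec z y
  mult : ∀ x x' y y', prec x x' → prec y y' → prec (inf x y) (inf x' y')
  add : ∀ x x' y y', prec x x' → prec y y' → prec (sup x y) (sup x' y')
  decomp : ∀ x y z, prec z (sup x y) → ∃ x' y', prec x' x ∧ prec y' y ∧ z = sup x' y'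
  compl : ∀ x y z, prec x y → prec y z → ∃ w, inf w x = zero ∧ sup w y = z

/-- The reflexivization ⪯ of ≺. -/
def BasicLattice.ple {B : Type} (L : BasicLattice B) (x y : B) : Prop :=
  ∀ z, L.prec z x → L.prec z y

/-- A ≺-filter: ≻-closed and ≺-directed. -/
def BasicLattice.IsPrecFilter {B : Type} (L : BasicLattice B) (U : Set B) : Prop :=
  (∀ x y, y ∈ U → L.prec y x → x ∈ U) ∧
  (∀ x y, x ∈ U → y ∈ U → ∃ z ∈ U, L.prec z x ∧ L.prec z y)

/-- A ≺-ultrafilter: a maximal proper ≺-filter. -/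
def BasicLattice.IsUltra {B : Type} (L : BasicLattice B) (U : Set B) : Prop :=
  L.IsPrecFilter U ∧ U ≠ Set.univ ∧
  ∀ V, L.IsPrecFilter V → V ≠ Set.univ → U ⊆ V → U = V

/-- A ⪯-filter: ⪰-closed and ⪯-directed. -/
def BasicLattice.IsPleFilter {B : Type} (L : BasicLattice B) (U : Set B) : Prop :=
  (∀ x y, y ∈ U → L.ple y x → x ∈ U) ∧
  (∀ x y, x ∈ U → y ∈ U → ∃ z ∈ U, L.ple z x ∧ L.ple z y)

/-!
The one non-trivial ingredient is that `⪯` followed by `≺` is `≺`: if `z ⪯ m ≺ n`, choose `t ≻ z`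
by cofinality; multiplicativity gives `z = z ∧ m ≺ t ∧ n ⪯ n`. Hence for `x ≺ a`, `y ≺ b` with
`x, y ∈ U` and a common `⪯`-lower bound `z ∈ U`, we get `z ⪯ x ∧ y ≺ a ∧ b`, so `z ≺ a ∧ b`, and
interpolating between `z` and `a ∧ b` yields a common `≺`-lower bound of `a, b` in `U^≺`.
-/

namespace BasicLattice

variable {B : Type} {L : BasicLattice B}

/-- The set `U^≺`. -/
def precUpper (L : BasicLattice B) (U : Set B) : Set B :=
  {y | ∃ x ∈ U, L.prec x y}

def PleDirected (L : BasicLattice B) (U : Set B) : Prop :=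
  ∀ x y, x ∈ U → y ∈ U → ∃ z ∈ U, L.ple z x ∧ L.ple z y

theorem ple_of_prec {x y : B} (h : L.prec x y) : L.ple x y :=
  fun _ hz => L.trans hz h

theorem inf_eq_left_of_ple {x y : B} (h : L.ple x y) : L.inf x y = x :=
  L.antisymm _ _ (fun _ hz => L.inf_le_left x y _ hz) (L.le_inf x y x (fun _ hz => hz) h)

theorem prec_of_ple_of_prec {z m n : B} (hzm : L.ple z m) (hmn : L.prec m n) : L.prec z n := by
  obtain ⟨t, hzt⟩ := L.cofin z
  have h : L.prec (L.inf z m) (L.inf t n) := L.mult z t m n hzt hmn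
  rw [inf_eq_left_of_ple hzm] at h
  exact L.inf_le_right t n z h

theorem isPrecFilter_precUpper {U : Set B} (hU : L.PleDirected U) :
    L.IsPrecFilter (L.precUpper U) := by
  refine ⟨fun x y ⟨u, hu, huy⟩ hyx => ⟨u, hu, L.trans huy hyx⟩, ?_⟩
  rintro a b ⟨x, hx, hxa⟩ ⟨y, hy, hyb⟩
  obtain ⟨z, hz, hzx, hzy⟩ := hU x y hx hy
  have hz_inf : L.prec z (L.inf a b) :=
    prec_of_ple_of_prec (L.le_inf x y z hzx hzy) (L.mult x a y b hxa hyb)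
  obtain ⟨c, hzc, hc_inf⟩ := L.interp z _ hz_inf
  exact ⟨c, ⟨z, hz, hzc⟩, L.inf_le_left a b c hc_inf, L.inf_le_right a b c hc_inf⟩

theorem IsPrecFilter.subset_precUpper {U : Set B} (hU : L.IsPrecFilter U) :
    U ⊆ L.precUpper U := fun u hu => by
  obtain ⟨z, hz, hzu, -⟩ := hU.2 u u hu hu
  exact ⟨z, hz, hzu⟩

theorem IsPrecFilter.isPleFilter {U : Set B} (hU : L.IsPrecFilter U) : L.IsPleFilter U := by
  refine ⟨fun x y hy hyx => ?_, fun x y hx hy => ?_⟩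
  · obtain ⟨z, hz, hzy⟩ := hU.subset_precUpper hy
    exact hU.1 x z hz (hyx z hzy)
  · obtain ⟨z, hz, hzx, hzy⟩ := hU.2 x y hx hy
    exact ⟨z, hz, ple_of_prec hzx, ple_of_prec hzy⟩

theorem IsPleFilter.isPrecFilter {U : Set B} (hU : L.IsPleFilter U)
    (hco : U ⊆ L.precUpper U) : L.IsPrecFilter U := by
  refine ⟨fun x y hy hyx => hU.1 x y hy (ple_of_prec hyx), fun x y hx hy => ?_⟩
  obtain ⟨z, hz, hzx, hzy⟩ := hU.2 x y hx hy
  obtain ⟨u, hu, huz⟩ := hco hz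
  exact ⟨u, hu, hzx u huz, hzy u huz⟩

end BasicLattice

/-- If U is ⪯-directed then U^≺ is a ≺-filter; and U is a ≺-filter iff U is a
≺-coinitial ⪯-filter. -/
theorem precFilter_of_directed_and_char {B : Type} (L : BasicLattice B) (U : Set B) :
    ((∀ x y, x ∈ U → y ∈ U → ∃ z ∈ U, L.ple z x ∧ L.ple z y) →
      L.IsPrecFilter {y | ∃ x ∈ U, L.prec x y}) ∧
    (L.IsPrecFilter U ↔ (L.IsPleFilter U ∧ U ⊆ {y | ∃ x ∈ U, L.prec x y})) :=
  ⟨BasicLattice.isPrecFilter_precUpper,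
    ⟨fun h => ⟨h.isPleFilter, h.subset_precUpper⟩, fun h => h.1.isPrecFilter h.2⟩⟩
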